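/- The time zone of a temporal k-core equals the union of its rectangles: the set B of all subintervals of the query range [Ts,Te] inducing a core identical to T with TTI [ts,te] equals the union over all LTIs [ts',te'] of T of the rectangles R = {[a,b] | ts' ≤ a ≤ ts, te ≤ b ≤ te'}. -/

import Mathlib

abbrev TEdge : Type := ℕ × ℕ × ℤ

/-- Projection of a temporal edge set over time interval [a,b]. -/
def projE (E : Finset TEdge) (a b : ℤ) : Finset TEdge :=
  E.filter (fun e => a ≤ e.2.2 ∧ e.2.2 ≤ b)

def verts (E : Finset TEdge) : Finset ℕ :=
  E.image (fun e => e.1) ∪ E.image (fun e => e.2.1)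

/-- Distinct neighbors of `v` inside vertex set `S` via edges of `E`. -/
def nbrs (E : Finset TEdge) (S : Finset ℕ) (v : ℕ) : Finset ℕ :=
  S.filter (fun u => u ≠ v ∧
    (E.filter (fun e => (e.1 = u ∧ e.2.1 = v) ∨ (e.1 = v ∧ e.2.1 = u))).Nonempty)

/-- `S` is a `k`-core candidate: every vertex of `S` has ≥ k distinct neighbors in `S`. -/
def isCoreSet (E : Finset TEdge) (k : ℕ) (S : Finset ℕ) : Prop :=
  ∀ v ∈ S, k ≤ (nbrs E S v).card

instance (E : Finset TEdge) (k : ℕ) : DecidablePred (isCoreSet E k) := fun S => by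
  unfold isCoreSet; infer_instance

/-- The `k`-core vertex set of a temporal edge set: union of all candidates. -/
def core (E : Finset TEdge) (k : ℕ) : Finset ℕ :=
  ((verts E).powerset.filter (isCoreSet E k)).sup id

/-- The edges of `E` induced among the `k`-core vertices. -/
def coreEdges (E : Finset TEdge) (k : ℕ) : Finset TEdge :=
  E.filter (fun e => e.1 ∈ core E k ∧ e.2.1 ∈ core E k)

/-- Vertices of the temporal k-core of interval [a,b]. -/
def coreV (E : Finset TEdge) (k : ℕ) (a b : ℤ) : Finset ℕ :=
  core (projE E a b) k

/-- Temporal edges of the temporal k-core of interval [a,b]. -/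
def coreE (E : Finset TEdge) (k : ℕ) (a b : ℤ) : Finset TEdge :=
  coreEdges (projE E a b) k

/-- Two intervals induce identical temporal k-cores (same vertices and temporal edges). -/
def identCore (E : Finset TEdge) (k : ℕ) (a b a' b' : ℤ) : Prop :=
  coreV E k a b = coreV E k a' b' ∧ coreE E k a b = coreE E k a' b'

/-- `[ts',te']` is a loosest time interval (within query range `[Ts,Te]`) of the
temporal k-core induced by `[ts,te]`: it induces an identical core and is maximal
among subintervals of `[Ts,Te]` doing so. -/
def isLTI (E : Finset TEdge) (k : ℕ) (Ts Te ts te ts' te' : ℤ) : Prop :=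
  Ts ≤ ts' ∧ ts' ≤ te' ∧ te' ≤ Te ∧ identCore E k ts' te' ts te ∧
    ∀ a b : ℤ, Ts ≤ a → a ≤ ts' → te' ≤ b → b ≤ Te →
      identCore E k a b ts te → a = ts' ∧ b = te'

/-! The k-core is monotone in the edge set, so an interval squeezed between `[ts,te]` and an
interval inducing `T` again induces `T`: this gives the rectangles. Conversely, `T` has temporal
edges at times `ts` and `te`, so every interval inducing `T` contains `[ts,te]`; inside the finite
query range it extends to a maximal such interval, which is an LTI. -/

theorem exists_maximal_superinterval (P : ℤ → ℤ → Prop) {Ts Te a b : ℤ}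
    (hTs : Ts ≤ a) (hTe : b ≤ Te) (hP : P a b) :
    ∃ c d : ℤ, Ts ≤ c ∧ c ≤ a ∧ b ≤ d ∧ d ≤ Te ∧ P c d ∧
      ∀ c' d' : ℤ, Ts ≤ c' → c' ≤ c → d ≤ d' → d' ≤ Te → P c' d' → c' = c ∧ d' = d := by
  classical
  let S := (Finset.Icc Ts a ×ˢ Finset.Icc b Te).filter (fun p => P p.1 p.2)
  have hab : (a, b) ∈ S := by simp [S, hTs, hTe, hP]
  -- a candidate of greatest length is maximal under inclusion
  obtain ⟨⟨c, d⟩, hcd, hmax⟩ := S.exists_max_image (fun p => p.2 - p.1) ⟨_, hab⟩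
  simp only [S, Finset.mem_filter, Finset.mem_product, Finset.mem_Icc] at hcd
  refine ⟨c, d, hcd.1.1.1, hcd.1.1.2, hcd.1.2.1, hcd.1.2.2, hcd.2, ?_⟩
  intro c' d' hTsc' hc' hd' hd'Te hP'
  have hwider := hmax (c', d') (by simp [S, hTsc', hd'Te, hP']; omega)
  dsimp only at hwider
  omega

lemma projE_mono (E : Finset TEdge) {a b a' b' : ℤ} (ha : a' ≤ a) (hb : b ≤ b') :
    projE E a b ⊆ projE E a' b' :=
  Finset.monotone_filter_right E fun _ _ he => ⟨ha.trans he.1, he.2.trans hb⟩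

lemma le_time_of_mem_coreE {E : Finset TEdge} {k : ℕ} {a b : ℤ} {e : TEdge}
    (he : e ∈ coreE E k a b) : a ≤ e.2.2 ∧ e.2.2 ≤ b :=
  (Finset.mem_filter.1 (Finset.mem_filter.1 he).1).2

section Monotone

variable {E E' : Finset TEdge} {k : ℕ}

lemma verts_mono (h : E ⊆ E') : verts E ⊆ verts E' :=
  Finset.union_subset_union (Finset.image_subset_image h) (Finset.image_subset_image h)

lemma nbrs_mono (h : E ⊆ E') (S : Finset ℕ) (v : ℕ) : nbrs E S v ⊆ nbrs E' S v :=
  Finset.monotone_filter_right S fun _ _ hu =>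
    ⟨hu.1, hu.2.mono (Finset.filter_subset_filter _ h)⟩

lemma isCoreSet.mono {S : Finset ℕ} (h : E ⊆ E') (hS : isCoreSet E k S) : isCoreSet E' k S :=
  fun v hv => (hS v hv).trans (Finset.card_le_card (nbrs_mono h S v))

lemma core_mono (h : E ⊆ E') : core E k ⊆ core E' k := by
  intro v hv
  simp only [core, Finset.mem_sup, Finset.mem_filter, Finset.mem_powerset, id] at hv ⊢
  obtain ⟨S, ⟨hSV, hS⟩, hvS⟩ := hv
  exact ⟨S, ⟨hSV.trans (verts_mono h), hS.mono h⟩, hvS⟩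

end Monotone

section Sandwich

variable {E₁ E₂ E₃ : Finset TEdge} {k : ℕ}

lemma core_eq_of_subset_of_subset (h₁₂ : E₁ ⊆ E₂) (h₂₃ : E₂ ⊆ E₃)
    (hV : core E₁ k = core E₃ k) : core E₂ k = core E₁ k :=
  (hV ▸ core_mono h₂₃).antisymm (core_mono h₁₂)

lemma coreEdges_eq_of_subset_of_subset (h₁₂ : E₁ ⊆ E₂) (h₂₃ : E₂ ⊆ E₃)
    (hV : core E₁ k = core E₃ k) (hE : coreEdges E₁ k = coreEdges E₃ k) :
    coreEdges E₂ k = coreEdges E₁ k := by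
  have hV₂ := core_eq_of_subset_of_subset h₁₂ h₂₃ hV
  apply Finset.Subset.antisymm
  · calc coreEdges E₂ k ⊆ coreEdges E₃ k := by
          unfold coreEdges; rw [hV₂, hV]; exact Finset.filter_subset_filter _ h₂₃
      _ = coreEdges E₁ k := hE.symm
  · unfold coreEdges; rw [hV₂]; exact Finset.filter_subset_filter _ h₁₂

end Sandwich

lemma identCore_of_mem_rectangle {E : Finset TEdge} {k : ℕ} {ts te c d a b : ℤ}
    (h : identCore E k c d ts te) (hca : c ≤ a) (hats : a ≤ ts) (hteb : te ≤ b) (hbd : b ≤ d) :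
    identCore E k a b ts te := by
  have h₁₂ := projE_mono E hats hteb
  have h₂₃ := projE_mono E hca hbd
  exact ⟨core_eq_of_subset_of_subset h₁₂ h₂₃ h.1.symm,
    coreEdges_eq_of_subset_of_subset h₁₂ h₂₃ h.1.symm h.2.symm⟩

lemma le_and_le_of_identCore {E : Finset TEdge} {k : ℕ} {ts te a b : ℤ}
    (hts : ∃ e ∈ coreE E k ts te, e.2.2 = ts) (hte : ∃ e ∈ coreE E k ts te, e.2.2 = te)
    (h : identCore E k a b ts te) : a ≤ ts ∧ te ≤ b := by
  obtain ⟨e₁, he₁, rfl⟩ := hts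
  obtain ⟨e₂, he₂, rfl⟩ := hte
  rw [← h.2] at he₁ he₂
  exact ⟨(le_time_of_mem_coreE he₁).1, (le_time_of_mem_coreE he₂).2⟩

theorem stmt_12_general (E : Finset TEdge) (k : ℕ) (Ts Te ts te : ℤ)
    (hmin : IsLeast {t : ℤ | ∃ e ∈ coreE E k ts te, e.2.2 = t} ts)
    (hmax : IsGreatest {t : ℤ | ∃ e ∈ coreE E k ts te, e.2.2 = t} te) :
    ∀ a b : ℤ, Ts ≤ a → a ≤ b → b ≤ Te →
      (identCore E k a b ts te ↔
        ∃ ts' te' : ℤ, isLTI E k Ts Te ts te ts' te' ∧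
          ts' ≤ a ∧ a ≤ ts ∧ te ≤ b ∧ b ≤ te') := by
  intro a b hTsa hab hbTe
  constructor
  · intro hid
    obtain ⟨hats, hteb⟩ := le_and_le_of_identCore hmin.1 hmax.1 hid
    obtain ⟨ts', te', hTsts', hts'a, hbte', hte'Te, hid', hmaximal⟩ :=
      exists_maximal_superinterval (fun c d => identCore E k c d ts te) hTsa hbTe hid
    exact ⟨ts', te', ⟨hTsts', by omega, hte'Te, hid', hmaximal⟩,
      hts'a, hats, hteb, hbte'⟩
  · rintro ⟨ts', te', ⟨-, -, -, hid, -⟩, hts'a, hats, hteb, hbte'⟩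
    exact identCore_of_mem_rectangle hid hts'a hats hteb hbte'

/-- the time zone of a temporal k-core (all subintervals of [Ts,Te]
inducing a core identical to the one with TTI [ts,te]) equals the union over its
LTIs [ts',te'] of the rectangles {[a,b] | ts' ≤ a ≤ ts, te ≤ b ≤ te'}. -/
theorem stmt_12 (E : Finset TEdge) (k : ℕ) (Ts Te ts te : ℤ)
    (hTs : Ts ≤ ts) (hTe : te ≤ Te)
    (hne : (coreE E k ts te).Nonempty)
    (hmin : IsLeast {t : ℤ | ∃ e ∈ coreE E k ts te, e.2.2 = t} ts)
    (hmax : IsGreatest {t : ℤ | ∃ e ∈ coreE E k ts te, e.2.2 = t} te) :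
    ∀ a b : ℤ, Ts ≤ a → a ≤ b → b ≤ Te →
      (identCore E k a b ts te ↔
        ∃ ts' te' : ℤ, isLTI E k Ts Te ts te ts' te' ∧
          ts' ≤ a ∧ a ≤ ts ∧ te ≤ b ∧ b ≤ te') :=
  stmt_12_general E k Ts Te ts te hmin hmax
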